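/- Let n ≥ 3 and 0 < C₀ < 1. Let 0 < γ₁ ≤ 1/2, 0 ≤ γ₂ ≤ 1, 0 ≤ γ₃ ≤ 1, and define the unit vectors ν₁ = −eₙ, ν₂ = (−eₙ + γ₁ e_{n−1})/√(1+γ₁²), ν₃ = (−eₙ + γ₂ e_{n−1} + γ₃ e_{n−2})/√(1+γ₂²+γ₃²) in ℝⁿ, and the hyperplanes Πₖ = { v ∈ ℝⁿ : v·νₖ = 0 } for k = 1, 2, 3. Assume ν₁·ν₂ ≤ 1−C₀, ν₁·ν₃ ≤ 1−C₀ and ν₂·ν₃ ≤ 1−C₀. Then there exists a constant C > 0, depending only on C₀, such that every real symmetric n×n matrix g satisfies ‖g‖ ≤ C · max_{k=1,2,3} sup{ |⟨g v, w⟩| : v, w ∈ Πₖ, ‖v‖ = ‖w‖ = 1 }, where ‖g‖ is the operator norm of g on ℝⁿ. -/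

import Mathlib

/-
Write `B(x, y) = ⟪g x, y⟫` and let `M` bound `B` on unit vectors of each `Πₖ`. As `Π₁ = eₙᗮ`,
only the values `B(eₙ, ·)` are not controlled directly. The vectors `γ₁ eₙ + eₙ₋₁ ∈ Π₂` and
`γ₂ eₙ + eₙ₋₁, γ₃ eₙ + eₙ₋₂ ∈ Π₃` bound the quadratics `t² B(eₙ, eₙ) + 2t B(eₙ, f)` at
`(t, f) = (γ₁, eₙ₋₁), (γ₂, eₙ₋₁), (γ₃, eₙ₋₂)`, while `Π₁ ∩ eₙ₋₁ᗮ ⊆ Π₂` bounds `γ₁ B(eₙ, p)` for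
`p ⊥ eₙ, eₙ₋₁`. The separation conditions bound the Gram determinants `γ₁²`, `γ₂² + γ₃²` and
`(γ₁ - γ₂)² + γ₃² (1 + γ₁²)` of the unnormalised normals below by `s = C₀ (2 - C₀)`, so either
`γ₃` or both `γ₂` and `γ₁ - γ₂` stay away from `0`; eliminating between the quadratics bounds
`B(eₙ, eₙ)` and `B(eₙ, eₙ₋₁)` by `O(M / s³)`. Splitting off one unit direction at a time then
bounds `‖g‖`.
-/

open scoped RealInnerProductSpace

section OrthogonalExtension

variable {E F : Type*} [NormedAddCommGroup E] [InnerProductSpace ℝ E]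
  [SeminormedAddCommGroup F] [NormedSpace ℝ F]

lemma norm_sub_inner_smul_le {e : E} (he : ‖e‖ = 1) (x : E) : ‖x - ⟪x, e⟫ • e‖ ≤ ‖x‖ := by
  have h : ‖x - ⟪x, e⟫ • e‖ ^ 2 = ‖x‖ ^ 2 - ⟪x, e⟫ ^ 2 := by
    rw [norm_sub_sq_real, real_inner_smul_right, norm_smul, he, Real.norm_eq_abs, mul_one,
      sq_abs]
    ring
  exact (pow_le_pow_iff_left₀ (norm_nonneg _) (norm_nonneg _) two_ne_zero).1
    (by rw [h]; linarith [sq_nonneg ⟪x, e⟫])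

lemma norm_apply_le_of_orthogonal_unit (f : E →L[ℝ] F) {V : Submodule ℝ E} {e : E}
    (heV : e ∈ V) (he : ‖e‖ = 1) {K L : ℝ} (hK0 : 0 ≤ K)
    (hK : ∀ p ∈ V, ⟪p, e⟫ = 0 → ‖f p‖ ≤ K * ‖p‖) (hL : ‖f e‖ ≤ L) {x : E} (hx : x ∈ V) :
    ‖f x‖ ≤ (K + L) * ‖x‖ := by
  set p := x - ⟪x, e⟫ • e with hp
  have hpe : ⟪p, e⟫ = 0 := by
    rw [hp, inner_sub_left, real_inner_smul_left, real_inner_self_eq_norm_sq, he]; ring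
  have hfp : ‖f p‖ ≤ K * ‖x‖ :=
    (hK p (V.sub_mem hx (V.smul_mem _ heV)) hpe).trans
      (mul_le_mul_of_nonneg_left (norm_sub_inner_smul_le he x) hK0)
  have hcoef : |⟪x, e⟫| ≤ ‖x‖ := by simpa [he] using abs_real_inner_le_norm x e
  calc ‖f x‖ = ‖f p + ⟪x, e⟫ • f e‖ := by rw [hp, map_sub, map_smul, sub_add_cancel]
    _ ≤ ‖f p‖ + |⟪x, e⟫| * ‖f e‖ := by
      rw [← Real.norm_eq_abs, ← norm_smul]; exact norm_add_le _ _
    _ ≤ K * ‖x‖ + ‖x‖ * L := by gcongr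
    _ = (K + L) * ‖x‖ := by ring

lemma opNorm_le_of_orthogonal_unit (f : E →L[ℝ] F) {e : E} (he : ‖e‖ = 1) {K L : ℝ}
    (hK0 : 0 ≤ K) (hK : ∀ p, ⟪p, e⟫ = 0 → ‖f p‖ ≤ K * ‖p‖) (hL : ‖f e‖ ≤ L) :
    ‖f‖ ≤ K + L :=
  f.opNorm_le_bound (add_nonneg hK0 ((norm_nonneg _).trans hL)) fun _ =>
    norm_apply_le_of_orthogonal_unit f Submodule.mem_top he hK0 (fun p _ => hK p) hL
      Submodule.mem_top

end OrthogonalExtension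

section Hyperplane

variable {E : Type*} [NormedAddCommGroup E] [InnerProductSpace ℝ E]

def BoundedOnHyperplane (A : E →L[ℝ] E) (ν : E) (M : ℝ) : Prop :=
  ∀ v w, ⟪v, ν⟫ = 0 → ⟪w, ν⟫ = 0 → |⟪A v, w⟫| ≤ M * (‖v‖ * ‖w‖)

variable {A : E →L[ℝ] E} {ν : E} {M : ℝ}

lemma BoundedOnHyperplane.mono {M' : ℝ} (h : BoundedOnHyperplane A ν M) (hM : M ≤ M') :
    BoundedOnHyperplane A ν M' := fun v w hv hw =>
  (h v w hv hw).trans (mul_le_mul_of_nonneg_right hM (by positivity))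

lemma BoundedOnHyperplane.of_smul {c : ℝ} (h : BoundedOnHyperplane A (c • ν) M) :
    BoundedOnHyperplane A ν M := fun v w hv hw =>
  h v w (by rw [real_inner_smul_right, hv, mul_zero]) (by rw [real_inner_smul_right, hw, mul_zero])

lemma BoundedOnHyperplane.nonneg (h : BoundedOnHyperplane A ν M) {v : E} (hv : ⟪v, ν⟫ = 0)
    (hv0 : v ≠ 0) : 0 ≤ M := by
  have hpos : 0 < ‖v‖ * ‖v‖ := by positivity
  exact nonneg_of_mul_nonneg_left ((abs_nonneg _).trans (h v v hv hv)) hpos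

lemma boundedOnHyperplane_sSup (A : E →L[ℝ] E) (ν : E) :
    BoundedOnHyperplane A ν (sSup {t : ℝ | ∃ v w : E,
      ⟪v, ν⟫ = 0 ∧ ⟪w, ν⟫ = 0 ∧ ‖v‖ = 1 ∧ ‖w‖ = 1 ∧ t = |⟪A v, w⟫|}) := by
  intro v w hv hw
  rcases eq_or_ne v 0 with rfl | hv0
  · simp
  rcases eq_or_ne w 0 with rfl | hw0
  · simp
  have hbdd : BddAbove {t : ℝ | ∃ v w : E,
      ⟪v, ν⟫ = 0 ∧ ⟪w, ν⟫ = 0 ∧ ‖v‖ = 1 ∧ ‖w‖ = 1 ∧ t = |⟪A v, w⟫|} := by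
    refine ⟨‖A‖, ?_⟩
    rintro t ⟨v, w, -, -, hv1, hw1, rfl⟩
    simpa [hv1, hw1] using (abs_real_inner_le_norm (A v) w).trans
      (mul_le_mul_of_nonneg_right (A.le_opNorm v) (norm_nonneg w))
  have hnv : 0 < ‖v‖ := norm_pos_iff.2 hv0
  have hnw : 0 < ‖w‖ := norm_pos_iff.2 hw0
  have hunit := le_csSup hbdd ⟨‖v‖⁻¹ • v, ‖w‖⁻¹ • w,
    by rw [real_inner_smul_left, hv, mul_zero], by rw [real_inner_smul_left, hw, mul_zero],
    by rw [norm_smul, norm_inv, norm_norm, inv_mul_cancel₀ hnv.ne'],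
    by rw [norm_smul, norm_inv, norm_norm, inv_mul_cancel₀ hnw.ne'], rfl⟩
  rw [map_smul, real_inner_smul_left, real_inner_smul_right, abs_mul, abs_mul, abs_inv,
    abs_inv, abs_norm, abs_norm, ← mul_assoc, ← mul_inv, inv_mul_le_iff₀ (by positivity)]
    at hunit
  linarith

end Hyperplane

section TestVectors

variable {E : Type*} [NormedAddCommGroup E] [InnerProductSpace ℝ E]
  {A : E →L[ℝ] E} {ν e f : E} {M t : ℝ}

lemma norm_smul_add_mul_self (he : ‖e‖ = 1) (hf : ‖f‖ = 1) (hfe : ⟪f, e⟫ = 0) (t : ℝ) :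
    ‖t • e + f‖ * ‖t • e + f‖ = t ^ 2 + 1 := by
  rw [norm_add_sq_eq_norm_sq_add_norm_sq_real (by rw [real_inner_smul_left, real_inner_comm,
    hfe, mul_zero]), norm_smul, he, hf, Real.norm_eq_abs]
  nlinarith [sq_abs t]

variable (hA : (A : E →ₗ[ℝ] E).IsSymmetric) (he : ‖e‖ = 1) (hf : ‖f‖ = 1) (hfe : ⟪f, e⟫ = 0)
  (ht : |t| ≤ 1) (h₁ : BoundedOnHyperplane A e M) (h : BoundedOnHyperplane A ν M)
  (hν : ⟪t • e + f, ν⟫ = 0)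
include hA he hf hfe ht h₁ h hν

lemma abs_sq_mul_add_two_mul_le :
    |t ^ 2 * ⟪A e, e⟫ + 2 * t * ⟪A e, f⟫| ≤ 3 * M := by
  have hsymm : ⟪A f, e⟫ = ⟪A e, f⟫ := by
    rw [show ⟪A f, e⟫ = ⟪f, A e⟫ from hA f e, real_inner_comm]
  have hexp : ⟪A (t • e + f), t • e + f⟫ =
      (t ^ 2 * ⟪A e, e⟫ + 2 * t * ⟪A e, f⟫) + ⟪A f, f⟫ := by
    simp only [map_add, map_smul, inner_add_left, inner_add_right, real_inner_smul_left,
      real_inner_smul_right, hsymm]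
    ring
  have hv := h _ _ hν hν
  rw [hexp, norm_smul_add_mul_self he hf hfe] at hv
  have hff : |⟪A f, f⟫| ≤ M := by simpa [hf] using h₁ f f hfe hfe
  have ht2 : t ^ 2 ≤ 1 := by nlinarith [sq_abs t, abs_nonneg t]
  have hM : 0 ≤ M := (abs_nonneg _).trans hff
  calc |t ^ 2 * ⟪A e, e⟫ + 2 * t * ⟪A e, f⟫|
      ≤ |(t ^ 2 * ⟪A e, e⟫ + 2 * t * ⟪A e, f⟫) + ⟪A f, f⟫| + |⟪A f, f⟫| :=
        norm_le_add_norm_add (t ^ 2 * ⟪A e, e⟫ + 2 * t * ⟪A e, f⟫) _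
    _ ≤ M * (t ^ 2 + 1) + M := by gcongr
    _ ≤ 3 * M := by nlinarith

lemma abs_mul_abs_inner_le {p : E} (hpe : ⟪p, e⟫ = 0) (hpν : ⟪p, ν⟫ = 0) :
    |t| * |⟪A e, p⟫| ≤ 3 * M * ‖p‖ := by
  have hsymm : ⟪A p, e⟫ = ⟪A e, p⟫ := by
    rw [show ⟪A p, e⟫ = ⟪p, A e⟫ from hA p e, real_inner_comm]
  have hM : 0 ≤ M := h₁.nonneg hfe (norm_ne_zero_iff.1 (by rw [hf]; norm_num))
  have hnorm : ‖t • e + f‖ ≤ 2 := by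
    nlinarith [norm_smul_add_mul_self he hf hfe t, norm_nonneg (t • e + f), sq_abs t,
      abs_nonneg t]
  have hpv : |t * ⟪A e, p⟫ + ⟪A p, f⟫| ≤ 2 * M * ‖p‖ := by
    have := h p _ hpν hν
    rw [inner_add_right, real_inner_smul_right, hsymm] at this
    nlinarith [mul_nonneg (mul_nonneg hM (norm_nonneg p)) (sub_nonneg.2 hnorm)]
  have hpf : |⟪A p, f⟫| ≤ M * ‖p‖ := by simpa [hf] using h₁ p f hpe hfe
  calc |t| * |⟪A e, p⟫| = |t * ⟪A e, p⟫| := (abs_mul _ _).symm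
    _ ≤ |t * ⟪A e, p⟫ + ⟪A p, f⟫| + |⟪A p, f⟫| := norm_le_add_norm_add (t * ⟪A e, p⟫) _
    _ ≤ 3 * M * ‖p‖ := by linarith

end TestVectors

section Scalar

lemma mul_le_sub_sq_of_div_sqrt_le {C₀ p P : ℝ} (hp : 0 ≤ p) (hP : 0 < P)
    (h : p / √P ≤ 1 - C₀) : C₀ * (2 - C₀) * P ≤ P - p ^ 2 := by
  have hle : p ≤ (1 - C₀) * √P := (div_le_iff₀ (Real.sqrt_pos.2 hP)).1 h
  have hsq : p ^ 2 ≤ (1 - C₀) ^ 2 * P := by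
    simpa [mul_pow, Real.sq_sqrt hP.le] using pow_le_pow_left₀ hp hle 2
  nlinarith

lemma mul_mul_abs_sub_mul_abs_le {a b X Y N : ℝ} (ha : 0 ≤ a) (hb : 0 ≤ b)
    (h₁ : |a ^ 2 * X + 2 * a * Y| ≤ N) (h₂ : |b ^ 2 * X + 2 * b * Y| ≤ N) :
    a * b * |a - b| * |X| ≤ (a + b) * N :=
  calc a * b * |a - b| * |X|
      = |b * (a ^ 2 * X + 2 * a * Y) - a * (b ^ 2 * X + 2 * b * Y)| := by
        rw [show b * (a ^ 2 * X + 2 * a * Y) - a * (b ^ 2 * X + 2 * b * Y) =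
          a * b * (a - b) * X by ring, abs_mul, abs_mul, abs_mul, abs_of_nonneg ha,
          abs_of_nonneg hb]
    _ ≤ |b * (a ^ 2 * X + 2 * a * Y)| + |a * (b ^ 2 * X + 2 * b * Y)| := abs_sub _ _
    _ = b * |a ^ 2 * X + 2 * a * Y| + a * |b ^ 2 * X + 2 * b * Y| := by
        rw [abs_mul, abs_mul, abs_of_nonneg ha, abs_of_nonneg hb]
    _ ≤ b * N + a * N := by gcongr
    _ = (a + b) * N := by ring

lemma sq_mul_abs_le_of_abs_sq_mul_add_two_mul_le {c X P N : ℝ} (hc : 0 ≤ c)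
    (h : |c ^ 2 * X + 2 * c * P| ≤ N) : c ^ 2 * |X| ≤ N + 2 * c * |P| := by
  have := norm_le_add_norm_add (c ^ 2 * X) (2 * c * P)
  rw [Real.norm_eq_abs, Real.norm_eq_abs, Real.norm_eq_abs, abs_mul, abs_mul, abs_mul,
    abs_two, abs_of_nonneg hc, abs_of_nonneg (sq_nonneg c)] at this
  linarith

variable {s γ₁ γ₂ γ₃ X Y P N : ℝ} (hs : 0 < s) (hγ₁ : 0 ≤ γ₁) (hγ₁' : γ₁ ≤ 1 / 2)
  (hs₁ : s ≤ γ₁ ^ 2) (h₁ : |γ₁ ^ 2 * X + 2 * γ₁ * Y| ≤ N)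
include hs hγ₁ hγ₁' hs₁ h₁

lemma pow_three_mul_abs_sq_coeff_le (hγ₂ : 0 ≤ γ₂) (hγ₂' : γ₂ ≤ 1) (hγ₃ : 0 ≤ γ₃)
    (hγ₃' : γ₃ ≤ 1) (hs₂ : s ≤ γ₂ ^ 2 + γ₃ ^ 2) (hs₃ : s ≤ (γ₁ - γ₂) ^ 2 + 2 * γ₃ ^ 2)
    (h₂ : |γ₂ ^ 2 * X + 2 * γ₂ * Y| ≤ N) (h₃ : |γ₃ ^ 2 * X + 2 * γ₃ * P| ≤ N)
    (hP : γ₁ * |P| ≤ N) : s ^ 3 * |X| ≤ 8 * N := by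
  have hN : 0 ≤ N := (abs_nonneg _).trans h₁
  have hsγ₁ : s ≤ γ₁ := hs₁.trans (by nlinarith)
  have hs' : s ≤ 1 / 4 := hs₁.trans (by nlinarith)
  rcases le_or_gt (s / 3) (γ₃ ^ 2) with hγ₃s | hγ₃s
  · have hc := mul_le_mul_of_nonneg_left
      (sq_mul_abs_le_of_abs_sq_mul_add_two_mul_le hγ₃ h₃) hγ₁
    calc s ^ 3 * |X| = 3 * s * (s * (s / 3 * |X|)) := by ring
      _ ≤ 3 * s * (γ₁ * (γ₃ ^ 2 * |X|)) := by gcongr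
      _ ≤ 3 * s * (γ₁ * N + 2 * γ₃ * (γ₁ * |P|)) := by gcongr; linarith
      _ ≤ 3 * (1 / 4) * (1 / 2 * N + 2 * 1 * N) := by gcongr
      _ ≤ 8 * N := by linarith
  · have hγ₂s : 2 * s / 3 ≤ γ₂ := by nlinarith
    have hγ₁₂s : s / 3 ≤ |γ₁ - γ₂| := by
      have : |γ₁ - γ₂| ≤ 1 := abs_le.2 ⟨by linarith, by linarith⟩
      nlinarith [sq_abs (γ₁ - γ₂), abs_nonneg (γ₁ - γ₂)]
    calc s ^ 3 * |X| = 9 / 2 * (s * (2 * s / 3) * (s / 3) * |X|) := by ring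
      _ ≤ 9 / 2 * (γ₁ * γ₂ * |γ₁ - γ₂| * |X|) := by gcongr
      _ ≤ 9 / 2 * ((γ₁ + γ₂) * N) :=
        mul_le_mul_of_nonneg_left (mul_mul_abs_sub_mul_abs_le hγ₁ hγ₂ h₁ h₂) (by norm_num)
      _ ≤ 9 / 2 * ((1 / 2 + 1) * N) := by gcongr
      _ ≤ 8 * N := by linarith

lemma pow_three_mul_abs_linear_coeff_le (hX : s ^ 3 * |X| ≤ 8 * N) :
    s ^ 3 * |Y| ≤ 3 * N := by
  have hN : 0 ≤ N := (abs_nonneg _).trans h₁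
  have hsγ₁ : s ≤ γ₁ := hs₁.trans (by nlinarith)
  have hs' : s ≤ 1 / 4 := hs₁.trans (by nlinarith)
  have hγ₁0 : 0 < γ₁ := lt_of_lt_of_le hs hsγ₁
  have hY : 2 * γ₁ * |Y| ≤ N + γ₁ ^ 2 * |X| := by
    have := norm_le_add_norm_add' (γ₁ ^ 2 * X) (2 * γ₁ * Y)
    rw [Real.norm_eq_abs, Real.norm_eq_abs, Real.norm_eq_abs, abs_mul, abs_mul, abs_mul,
      abs_two, abs_of_nonneg hγ₁, abs_of_nonneg (sq_nonneg γ₁)] at this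
    linarith
  have hs3 : s ^ 3 ≤ γ₁ * (1 / 4) ^ 2 :=
    calc s ^ 3 = s * s ^ 2 := by ring
      _ ≤ γ₁ * (1 / 4) ^ 2 := by gcongr
  refine le_of_mul_le_mul_left ?_ hγ₁0
  nlinarith [mul_le_mul_of_nonneg_left hY (pow_nonneg hs.le 3),
    mul_le_mul_of_nonneg_left hX (sq_nonneg γ₁), mul_le_mul_of_nonneg_right hs3 hN,
    mul_nonneg (mul_nonneg hγ₁ (sub_nonneg.2 hγ₁')) hN]

end Scalar

section Core

variable {E : Type*} [NormedAddCommGroup E] [InnerProductSpace ℝ E] {A : E →L[ℝ] E}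

theorem opNorm_le_of_boundedOnHyperplane_of_inner_le (hA : (A : E →ₗ[ℝ] E).IsSymmetric)
    {e f : E} (he : ‖e‖ = 1) (hf : ‖f‖ = 1) (hef : ⟪e, f⟫ = 0) {M K X Y : ℝ} (hK : 0 ≤ K)
    (hb : BoundedOnHyperplane A e M)
    (hcross : ∀ p, ⟪p, e⟫ = 0 → ⟪p, f⟫ = 0 → |⟪A e, p⟫| ≤ K * ‖p‖)
    (hX : |⟪A e, e⟫| ≤ X) (hY : |⟪A e, f⟫| ≤ Y) :
    ‖A‖ ≤ M + 2 * (K + Y) + X := by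
  have hM : 0 ≤ M := hb.nonneg (by rw [real_inner_comm, hef]) (norm_ne_zero_iff.1 (by
    rw [hf]; norm_num))
  have hKY : 0 ≤ K + Y := add_nonneg hK ((abs_nonneg _).trans hY)
  have hcol : ∀ p, ⟪p, e⟫ = 0 → |⟪A e, p⟫| ≤ (K + Y) * ‖p‖ := by
    intro p hp
    refine norm_apply_le_of_orthogonal_unit (innerSL ℝ (A e)) (V := (ℝ ∙ e)ᗮ)
      (Submodule.mem_orthogonal_singleton_iff_inner_right.2 hef) hf hK
      (fun q hq hqf => ?_) (by simpa using hY)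
      (Submodule.mem_orthogonal_singleton_iff_inner_right.2 (by rw [real_inner_comm, hp]))
    rw [Submodule.mem_orthogonal_singleton_iff_inner_right, real_inner_comm] at hq
    simpa using hcross q hq hqf
  have hrow : ∀ p, ⟪p, e⟫ = 0 → ‖A p‖ ≤ (M + (K + Y)) * ‖p‖ := by
    intro p hp
    have := opNorm_le_of_orthogonal_unit (innerSL ℝ (A p)) he (K := M * ‖p‖)
      (L := (K + Y) * ‖p‖) (by positivity) (fun q hq => by simpa [mul_assoc] using hb p q hp hq)
      (by rw [innerSL_apply_apply, Real.norm_eq_abs, real_inner_comm,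
            ← show ⟪A e, p⟫ = ⟪e, A p⟫ from hA e p]
          exact hcol p hp)
    rw [innerSL_apply_norm] at this
    linarith
  have hAe : ‖A e‖ ≤ (K + Y) + X := by
    simpa [innerSL_apply_norm] using opNorm_le_of_orthogonal_unit (innerSL ℝ (A e)) he hKY
      (fun q hq => by simpa using hcol q hq) (by simpa using hX)
  calc ‖A‖ ≤ (M + (K + Y)) + ((K + Y) + X) :=
        opNorm_le_of_orthogonal_unit A he (by positivity) hrow hAe
    _ = M + 2 * (K + Y) + X := by ring

theorem opNorm_le_of_boundedOnHyperplanes (hA : (A : E →ₗ[ℝ] E).IsSymmetric)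
    {ε₁ ε₂ ε₃ : E} (h₁ : ‖ε₁‖ = 1) (h₂ : ‖ε₂‖ = 1) (h₃ : ‖ε₃‖ = 1) (h₁₂ : ⟪ε₁, ε₂⟫ = 0)
    (h₁₃ : ⟪ε₁, ε₃⟫ = 0) (h₂₃ : ⟪ε₂, ε₃⟫ = 0) {s γ₁ γ₂ γ₃ M : ℝ} (hs : 0 < s)
    (hγ₁ : 0 ≤ γ₁) (hγ₁' : γ₁ ≤ 1 / 2) (hγ₂ : 0 ≤ γ₂) (hγ₂' : γ₂ ≤ 1) (hγ₃ : 0 ≤ γ₃)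
    (hγ₃' : γ₃ ≤ 1) (hs₁ : s ≤ γ₁ ^ 2) (hs₂ : s ≤ γ₂ ^ 2 + γ₃ ^ 2)
    (hs₃ : s ≤ (γ₁ - γ₂) ^ 2 + 2 * γ₃ ^ 2) (hb₁ : BoundedOnHyperplane A ε₁ M)
    (hb₂ : BoundedOnHyperplane A (-ε₁ + γ₁ • ε₂) M)
    (hb₃ : BoundedOnHyperplane A (-ε₁ + γ₂ • ε₂ + γ₃ • ε₃) M) :
    ‖A‖ ≤ 50 / s ^ 3 * M := by
  have h₂₁ : ⟪ε₂, ε₁⟫ = 0 := by rw [real_inner_comm, h₁₂]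
  have h₃₁ : ⟪ε₃, ε₁⟫ = 0 := by rw [real_inner_comm, h₁₃]
  have h₃₂ : ⟪ε₃, ε₂⟫ = 0 := by rw [real_inner_comm, h₂₃]
  have hM : 0 ≤ M := hb₁.nonneg h₂₁ (norm_ne_zero_iff.1 (by rw [h₂]; norm_num))
  have hsγ₁ : s ≤ γ₁ := hs₁.trans (by nlinarith)
  have hs1 : s ≤ 1 := by linarith
  have habs : ∀ {γ : ℝ}, 0 ≤ γ → γ ≤ 1 → |γ| ≤ 1 := fun h h' => abs_le.2 ⟨by linarith, h'⟩
  have hγ₁1 : |γ₁| ≤ 1 := habs hγ₁ (by linarith)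
  have hu : ⟪γ₁ • ε₁ + ε₂, -ε₁ + γ₁ • ε₂⟫ = 0 := by
    simp only [inner_add_left, inner_add_right, inner_neg_right, real_inner_smul_left,
      real_inner_smul_right, real_inner_self_eq_norm_sq, h₁, h₂, h₁₂, h₂₁]
    ring
  have hw₂ : ⟪γ₂ • ε₁ + ε₂, -ε₁ + γ₂ • ε₂ + γ₃ • ε₃⟫ = 0 := by
    simp only [inner_add_left, inner_add_right, inner_neg_right, real_inner_smul_left,
      real_inner_smul_right, real_inner_self_eq_norm_sq, h₁, h₂, h₁₂, h₂₁, h₁₃, h₂₃]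
    ring
  have hw₃ : ⟪γ₃ • ε₁ + ε₃, -ε₁ + γ₂ • ε₂ + γ₃ • ε₃⟫ = 0 := by
    simp only [inner_add_left, inner_add_right, inner_neg_right, real_inner_smul_left,
      real_inner_smul_right, real_inner_self_eq_norm_sq, h₁, h₃, h₁₂, h₁₃, h₃₁, h₃₂]
    ring
  have hE₁ := abs_sq_mul_add_two_mul_le hA h₁ h₂ h₂₁ hγ₁1 hb₁ hb₂ hu
  have hE₂ := abs_sq_mul_add_two_mul_le hA h₁ h₂ h₂₁ (habs hγ₂ hγ₂') hb₁ hb₃ hw₂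
  have hE₃ := abs_sq_mul_add_two_mul_le hA h₁ h₃ h₃₁ (habs hγ₃ hγ₃') hb₁ hb₃ hw₃
  have hcross : ∀ p, ⟪p, ε₁⟫ = 0 → ⟪p, ε₂⟫ = 0 → |γ₁| * |⟪A ε₁, p⟫| ≤ 3 * M * ‖p‖ :=
    fun p hp₁ hp₂ => abs_mul_abs_inner_le hA h₁ h₂ h₂₁ hγ₁1 hb₁ hb₂ hu hp₁ (by
      rw [inner_add_right, inner_neg_right, real_inner_smul_right, hp₁, hp₂]; ring)
  have hP : γ₁ * |⟪A ε₁, ε₃⟫| ≤ 3 * M := by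
    simpa [abs_of_nonneg hγ₁, h₃] using hcross ε₃ h₃₁ h₃₂
  have hX :=
    pow_three_mul_abs_sq_coeff_le hs hγ₁ hγ₁' hs₁ hE₁ hγ₂ hγ₂' hγ₃ hγ₃' hs₂ hs₃ hE₂ hE₃ hP
  have hY := pow_three_mul_abs_linear_coeff_le hs hγ₁ hγ₁' hs₁ hE₁ hX
  have hcross' : ∀ p, ⟪p, ε₁⟫ = 0 → ⟪p, ε₂⟫ = 0 → |⟪A ε₁, p⟫| ≤ 3 * M / s * ‖p‖ := by
    intro p hp₁ hp₂
    rw [div_mul_eq_mul_div, le_div_iff₀ hs]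
    nlinarith [hcross p hp₁ hp₂,
      mul_le_mul_of_nonneg_right (hsγ₁.trans (le_abs_self γ₁)) (abs_nonneg ⟪A ε₁, p⟫)]
  have hs3 : s ^ 3 ≤ s := pow_le_of_le_one hs.le hs1 (by norm_num)
  calc ‖A‖ ≤ M + 2 * (3 * M / s + 9 * M / s ^ 3) + 24 * M / s ^ 3 :=
        opNorm_le_of_boundedOnHyperplane_of_inner_le hA h₁ h₂ h₁₂ (by positivity) hb₁ hcross'
          (by rw [le_div_iff₀' (by positivity)]; linarith)
          (by rw [le_div_iff₀' (by positivity)]; linarith)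
    _ ≤ M / s ^ 3 + 2 * (3 * M / s ^ 3 + 9 * M / s ^ 3) + 24 * M / s ^ 3 := by
        gcongr
        exact le_div_self hM (by positivity) (pow_le_one₀ hs.le hs1)
    _ = 49 * M / s ^ 3 := by ring
    _ ≤ 50 / s ^ 3 * M := by
        rw [div_mul_eq_mul_div]
        gcongr
        norm_num

end Core

section Normals

variable {E ι : Type*} [NormedAddCommGroup E] [InnerProductSpace ℝ E]

theorem opNorm_le_of_separated_normals {C₀ γ₁ γ₂ γ₃ M₁ M₂ M₃ : ℝ} (hC₀ : 0 < C₀) (hC₀' : C₀ < 1)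
    (hγ₁ : 0 < γ₁) (hγ₁' : γ₁ ≤ 1 / 2) (hγ₂ : 0 ≤ γ₂) (hγ₂' : γ₂ ≤ 1) (hγ₃ : 0 ≤ γ₃)
    (hγ₃' : γ₃ ≤ 1) {ε : ι → E} (hε : Orthonormal ℝ ε) {i₁ i₂ i₃ : ι} (hi₁₂ : i₁ ≠ i₂)
    (hi₁₃ : i₁ ≠ i₃) (hi₂₃ : i₂ ≠ i₃) {ν₁ ν₂ ν₃ : E} (hν₁ : ν₁ = -ε i₁)
    (hν₂ : ν₂ = (1 / √(1 + γ₁ ^ 2)) • (-ε i₁ + γ₁ • ε i₂))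
    (hν₃ : ν₃ = (1 / √(1 + γ₂ ^ 2 + γ₃ ^ 2)) • (-ε i₁ + γ₂ • ε i₂ + γ₃ • ε i₃))
    (h₁₂ : ⟪ν₁, ν₂⟫ ≤ 1 - C₀) (h₁₃ : ⟪ν₁, ν₃⟫ ≤ 1 - C₀) (h₂₃ : ⟪ν₂, ν₃⟫ ≤ 1 - C₀)
    {A : E →L[ℝ] E} (hA : (A : E →ₗ[ℝ] E).IsSymmetric) (hb₁ : BoundedOnHyperplane A ν₁ M₁)
    (hb₂ : BoundedOnHyperplane A ν₂ M₂) (hb₃ : BoundedOnHyperplane A ν₃ M₃) :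
    ‖A‖ ≤ 50 / (C₀ * (2 - C₀)) ^ 3 * max M₁ (max M₂ M₃) := by
  have hn : ∀ i, ‖ε i‖ = 1 := hε.1
  have ho : ∀ {i j}, i ≠ j → ⟪ε i, ε j⟫ = 0 := hε.inner_eq_zero
  have ho' : ∀ {i j}, i ≠ j → ⟪ε j, ε i⟫ = 0 := fun h => hε.inner_eq_zero h.symm
  subst hν₁ hν₂ hν₃
  replace hb₁ := hb₁.mono (le_max_left M₁ (max M₂ M₃))
  have hP₂ : (0 : ℝ) < 1 + γ₁ ^ 2 := by positivity
  have hP₃ : (0 : ℝ) < 1 + γ₂ ^ 2 + γ₃ ^ 2 := by positivity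
  simp only [inner_add_left, inner_add_right, inner_neg_left, inner_neg_right,
    real_inner_smul_left, real_inner_smul_right, real_inner_self_eq_norm_sq, hn, ho hi₁₂,
    ho hi₁₃, ho hi₂₃, ho' hi₁₂] at h₁₂ h₁₃ h₂₃
  have hs₁ := mul_le_sub_sq_of_div_sqrt_le (C₀ := C₀) zero_le_one hP₂ (by linarith)
  have hs₂ := mul_le_sub_sq_of_div_sqrt_le (C₀ := C₀) zero_le_one hP₃ (by linarith)
  have hs₃ := mul_le_sub_sq_of_div_sqrt_le (C₀ := C₀) (p := 1 + γ₁ * γ₂) (by positivity)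
    (mul_pos hP₂ hP₃)
    (by rw [Real.sqrt_mul hP₂.le]; convert h₂₃ using 1; field_simp; ring)
  have hs : 0 < C₀ * (2 - C₀) := by nlinarith
  have hγ₁sq : γ₁ ^ 2 ≤ 1 := by nlinarith
  have hP₂₃ : 1 ≤ (1 + γ₁ ^ 2) * (1 + γ₂ ^ 2 + γ₃ ^ 2) :=
    one_le_mul_of_one_le_of_one_le (by nlinarith) (by nlinarith)
  refine opNorm_le_of_boundedOnHyperplanes hA (hn i₁) (hn i₂) (hn i₃) (ho hi₁₂) (ho hi₁₃)
    (ho hi₂₃) hs hγ₁.le hγ₁' hγ₂ hγ₂' hγ₃ hγ₃' (by nlinarith) (by nlinarith)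
    (by nlinarith [mul_nonneg (sq_nonneg γ₃) (sub_nonneg.2 hγ₁sq),
      mul_le_mul_of_nonneg_left hP₂₃ hs.le])
    (BoundedOnHyperplane.of_smul (c := -1) (by rwa [neg_one_smul]))
    (hb₂.mono ((le_max_left _ _).trans (le_max_right _ _))).of_smul
    (hb₃.mono ((le_max_right _ _).trans (le_max_right _ _))).of_smul

end Normals

/-- Under the quantitative non-flatness conditions on the three unit
normals `ν₁, ν₂, ν₃`, there is a constant `C > 0` depending only on `C₀` such that
every symmetric matrix `g` satisfies
`‖g‖ ≤ C · max_k sup{ |⟨g v, w⟩| : v, w ∈ Πₖ, ‖v‖ = ‖w‖ = 1 }`,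
where `Πₖ` is the orthogonal complement of `νₖ` and `‖g‖` is the operator norm on
Euclidean `ℝⁿ`. -/
theorem stmt9 (C₀ : ℝ) (hC₀ : 0 < C₀) (hC₀' : C₀ < 1) :
    ∃ C : ℝ, 0 < C ∧
      ∀ (n : ℕ) (hn : 3 ≤ n) (γ₁ γ₂ γ₃ : ℝ),
        0 < γ₁ → γ₁ ≤ 1 / 2 → 0 ≤ γ₂ → γ₂ ≤ 1 → 0 ≤ γ₃ → γ₃ ≤ 1 →
      ∀ ν₁ ν₂ ν₃ : EuclideanSpace ℝ (Fin n),
        ν₁ = -EuclideanSpace.single (⟨n - 1, by omega⟩ : Fin n) (1 : ℝ) →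
        ν₂ = (1 / Real.sqrt (1 + γ₁ ^ 2)) •
          (-EuclideanSpace.single (⟨n - 1, by omega⟩ : Fin n) (1 : ℝ) +
            γ₁ • EuclideanSpace.single (⟨n - 2, by omega⟩ : Fin n) (1 : ℝ)) →
        ν₃ = (1 / Real.sqrt (1 + γ₂ ^ 2 + γ₃ ^ 2)) •
          (-EuclideanSpace.single (⟨n - 1, by omega⟩ : Fin n) (1 : ℝ) +
            γ₂ • EuclideanSpace.single (⟨n - 2, by omega⟩ : Fin n) (1 : ℝ) +
            γ₃ • EuclideanSpace.single (⟨n - 3, by omega⟩ : Fin n) (1 : ℝ)) →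
        ⟪ν₁, ν₂⟫ ≤ 1 - C₀ → ⟪ν₁, ν₃⟫ ≤ 1 - C₀ → ⟪ν₂, ν₃⟫ ≤ 1 - C₀ →
      ∀ g : Matrix (Fin n) (Fin n) ℝ, g.IsSymm →
        ‖Matrix.toEuclideanCLM (𝕜 := ℝ) g‖ ≤ C *
          max (sSup {t : ℝ | ∃ v w : EuclideanSpace ℝ (Fin n),
                ⟪v, ν₁⟫ = 0 ∧ ⟪w, ν₁⟫ = 0 ∧ ‖v‖ = 1 ∧ ‖w‖ = 1 ∧
                t = |⟪Matrix.toEuclideanCLM (𝕜 := ℝ) g v, w⟫|})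
            (max (sSup {t : ℝ | ∃ v w : EuclideanSpace ℝ (Fin n),
                ⟪v, ν₂⟫ = 0 ∧ ⟪w, ν₂⟫ = 0 ∧ ‖v‖ = 1 ∧ ‖w‖ = 1 ∧
                t = |⟪Matrix.toEuclideanCLM (𝕜 := ℝ) g v, w⟫|})
              (sSup {t : ℝ | ∃ v w : EuclideanSpace ℝ (Fin n),
                ⟪v, ν₃⟫ = 0 ∧ ⟪w, ν₃⟫ = 0 ∧ ‖v‖ = 1 ∧ ‖w‖ = 1 ∧
                t = |⟪Matrix.toEuclideanCLM (𝕜 := ℝ) g v, w⟫|})) := by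
  have hs : 0 < C₀ * (2 - C₀) := by nlinarith
  refine ⟨50 / (C₀ * (2 - C₀)) ^ 3, by positivity, ?_⟩
  intro n hn γ₁ γ₂ γ₃ hγ₁ hγ₁' hγ₂ hγ₂' hγ₃ hγ₃' ν₁ ν₂ ν₃ hν₁ hν₂ hν₃ h₁₂ h₁₃ h₂₃ g hg
  have hA : (Matrix.toEuclideanCLM (𝕜 := ℝ) g :
      EuclideanSpace ℝ (Fin n) →ₗ[ℝ] EuclideanSpace ℝ (Fin n)).IsSymmetric := by
    rw [Matrix.coe_toEuclideanCLM_eq_toEuclideanLin]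
    exact Matrix.isSymmetric_toEuclideanLin_iff.2 (Matrix.isHermitian_iff_isSymm.2 hg)
  exact opNorm_le_of_separated_normals hC₀ hC₀' hγ₁ hγ₁' hγ₂ hγ₂' hγ₃ hγ₃'
    (EuclideanSpace.orthonormal_single (𝕜 := ℝ) (ι := Fin n))
    (i₁ := ⟨n - 1, by omega⟩) (i₂ := ⟨n - 2, by omega⟩) (i₃ := ⟨n - 3, by omega⟩)
    (by simp [Fin.ext_iff]; omega) (by simp [Fin.ext_iff]; omega) (by simp [Fin.ext_iff]; omega)
    hν₁ hν₂ hν₃ h₁₂ h₁₃ h₂₃ hA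
    (boundedOnHyperplane_sSup _ ν₁) (boundedOnHyperplane_sSup _ ν₂)
    (boundedOnHyperplane_sSup _ ν₃)
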